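/- If β ∈ PB_n is a Brunnian braid (i.e., p_m(β) = 1 for all m ∈ {1,…,n}), then φ_n(β) is Brunnian in G_n^3, i.e., q_m(φ_n(β)) = 1 for all m. -/

import Mathlib

/-- A three-element set `{x,y,z}` has cardinality 3. -/
lemma card3 {α : Type*} [DecidableEq α] {x y z : α}
    (hxy : x ≠ y) (hxz : x ≠ z) (hyz : y ≠ z) : ({x, y, z} : Finset α).card = 3 := by
  rw [Finset.card_insert_of_notMem (by simp [hxy, hxz]), Finset.card_pair hyz]

/-- Index type for the generators `a_{ijk}` of `G_n^3`: three-element subsets of `Fin n`. -/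
abbrev TripIdx (n : ℕ) := {s : Finset (Fin n) // s.card = 3}

/-- The unordered triple `{i,j,k}` as an index. -/
def mkTrip {n : ℕ} (i j k : Fin n) (hij : i ≠ j) (hik : i ≠ k) (hjk : j ≠ k) : TripIdx n :=
  ⟨{i, j, k}, card3 hij hik hjk⟩

/-- Relations of the group `G_n^3`: every generator is an involution, generators whose
index triples share at most one index commute, and the tetrahedron relation
`a_{ijk}a_{ijl}a_{ikl}a_{jkl} = a_{jkl}a_{ikl}a_{ijl}a_{ijk}` holds. -/
def gn3Rels (n : ℕ) : Set (FreeGroup (TripIdx n)) :=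
  {r | (∃ s : TripIdx n, r = FreeGroup.of s * FreeGroup.of s) ∨
       (∃ s t : TripIdx n, (s.1 ∩ t.1).card ≤ 1 ∧
          r = FreeGroup.of s * FreeGroup.of t * (FreeGroup.of s)⁻¹ * (FreeGroup.of t)⁻¹) ∨
       (∃ (i j k l : Fin n) (hij : i ≠ j) (hik : i ≠ k) (hil : i ≠ l)
          (hjk : j ≠ k) (hjl : j ≠ l) (hkl : k ≠ l),
          r = FreeGroup.of (mkTrip i j k hij hik hjk) * FreeGroup.of (mkTrip i j l hij hil hjl) *
              FreeGroup.of (mkTrip i k l hik hil hkl) * FreeGroup.of (mkTrip j k l hjk hjl hkl) *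
              (FreeGroup.of (mkTrip j k l hjk hjl hkl) * FreeGroup.of (mkTrip i k l hik hil hkl) *
               FreeGroup.of (mkTrip i j l hij hil hjl) *
               FreeGroup.of (mkTrip i j k hij hik hjk))⁻¹)}

/-- The group `G_n^3`. -/
abbrev Gn3 (n : ℕ) := PresentedGroup (gn3Rels n)

/-- The generator `a_{ijk}` of `G_n^3`, with `ℕ` indices (strands are numbered
`0,…,n-1`); junk value `1` if the indices are out of range or not distinct. -/
def a3 (n : ℕ) (i j k : ℕ) : Gn3 n :=
  if h : i < n ∧ j < n ∧ k < n ∧ i ≠ j ∧ i ≠ k ∧ j ≠ k then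
    PresentedGroup.of (mkTrip ⟨i, h.1⟩ ⟨j, h.2.1⟩ ⟨k, h.2.2.1⟩
      (by simp [Fin.ext_iff, h.2.2.2.1]) (by simp [Fin.ext_iff, h.2.2.2.2.1])
      (by simp [Fin.ext_iff, h.2.2.2.2.2]))
  else 1

/-- Index deletion: strand indices above `m` are shifted down by one. -/
def dl (m x : ℕ) : ℕ := if x < m then x else x - 1

/-- `qCond n m q` says that `q : G_{n+1}^3 → G_n^3` is the homomorphism `q_m`: it kills the
generators whose index triple contains `m` and reindexes the remaining ones. -/
def qCond (n m : ℕ) (q : Gn3 (n + 1) →* Gn3 n) : Prop :=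
  ∀ i j k : ℕ, i < n + 1 → j < n + 1 → k < n + 1 → i ≠ j → i ≠ k → j ≠ k →
    q (a3 (n + 1) i j k) =
      if i = m ∨ j = m ∨ k = m then 1 else a3 n (dl m i) (dl m j) (dl m k)

/-- The element `c_{i,j} = (∏_{k>j, k≠i} a_{ijk}) (∏_{k<j, k≠i} a_{ijk})` of `G_n^3`
(products taken in increasing order of `k`). -/
def cc (n : ℕ) (i j : ℕ) : Gn3 n :=
  ((((List.range n).filter (fun k => j < k)).map (fun k => a3 n i j k)).prod) *
  ((((List.range n).filter (fun k => k < j ∧ k ≠ i)).map (fun k => a3 n i j k)).prod)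

/-! ### The braid group on `n+1` strands and its pure braid subgroup -/

/-- Relations of the Artin braid group on `n+1` strands, with generators
`σ_0, …, σ_{n-1}`: far commutation and the braid relation. -/
def braidRels (n : ℕ) : Set (FreeGroup (Fin n)) :=
  {r | (∃ i j : Fin n, (i : ℕ) + 1 < (j : ℕ) ∧
          r = FreeGroup.of i * FreeGroup.of j * (FreeGroup.of i)⁻¹ * (FreeGroup.of j)⁻¹) ∨
       (∃ i j : Fin n, (i : ℕ) + 1 = (j : ℕ) ∧
          r = FreeGroup.of i * FreeGroup.of j * FreeGroup.of i *
              (FreeGroup.of j * FreeGroup.of i * FreeGroup.of j)⁻¹)}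

/-- The braid group on `n+1` strands. -/
abbrev Braid (n : ℕ) := PresentedGroup (braidRels n)

/-- The canonical projection from the braid group on `n+1` strands to the symmetric
group, sending `σ_i` to the transposition `(i, i+1)`. -/
def braidPerm (n : ℕ) : Braid n →* Equiv.Perm (Fin (n + 1)) :=
  PresentedGroup.toGroup (f := fun i => Equiv.swap i.castSucc i.succ) (by
    rintro r (⟨i, j, hij, rfl⟩ | ⟨i, j, hij, rfl⟩) <;>
      simp only [map_mul, map_inv, FreeGroup.lift_apply_of]
    · have hc : Commute (Equiv.swap i.castSucc i.succ) (Equiv.swap j.castSucc j.succ) := by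
        apply Equiv.Perm.Disjoint.commute
        intro x
        by_cases hx : x = j.castSucc ∨ x = j.succ
        · left
          rcases hx with rfl | rfl <;>
            exact Equiv.swap_apply_of_ne_of_ne
              (by simp only [ne_eq, Fin.ext_iff, Fin.coe_castSucc, Fin.val_succ]; omega)
              (by simp only [ne_eq, Fin.ext_iff, Fin.coe_castSucc, Fin.val_succ]; omega)
        · push_neg at hx
          right
          exact Equiv.swap_apply_of_ne_of_ne hx.1 hx.2
      rw [hc.eq]; group
    · have hb : j.castSucc = i.succ := by
        simp only [Fin.ext_iff, Fin.coe_castSucc, Fin.val_succ]; omega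
      rw [hb]
      have hab : (i.castSucc : Fin (n + 1)) ≠ i.succ := by
        simp [Fin.ext_iff]
      have hac : (i.castSucc : Fin (n + 1)) ≠ j.succ := by
        simp only [ne_eq, Fin.ext_iff, Fin.coe_castSucc, Fin.val_succ]; omega
      have hbc : (i.succ : Fin (n + 1)) ≠ j.succ := by
        simp only [ne_eq, Fin.ext_iff, Fin.val_succ]; omega
      have e1 := Equiv.swap_mul_swap_mul_swap hbc.symm hac.symm
      have e2 := Equiv.swap_mul_swap_mul_swap hab hac
      rw [Equiv.swap_comm i.succ i.castSucc, Equiv.swap_comm j.succ i.succ] at e1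
      have key : Equiv.swap i.castSucc i.succ * Equiv.swap i.succ j.succ *
          Equiv.swap i.castSucc i.succ =
          Equiv.swap i.succ j.succ * Equiv.swap i.castSucc i.succ *
          Equiv.swap i.succ j.succ := by
        rw [e1, e2, Equiv.swap_comm]
      rw [key]; group)

/-- The pure braid group on `n+1` strands: the kernel of the projection to the
symmetric group. -/
def PureBraid (n : ℕ) : Subgroup (Braid n) := (braidPerm n).ker

/-- The generator `σ_k` of the braid group on `n+1` strands (junk value `1` if `k` is out
of range). -/
def σB {n : ℕ} (k : ℕ) : Braid n := if h : k < n then PresentedGroup.of ⟨k, h⟩ else 1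

/-- The band generator `A_{ij} = (σ_{j-1} ⋯ σ_{i+1}) σ_i^2 (σ_{j-1} ⋯ σ_{i+1})⁻¹`
(`0`-indexed strands `i < j`) of the pure braid group on `n+1` strands. -/
def band (n : ℕ) (i j : ℕ) : Braid n :=
  (((List.range' (i + 1) (j - i - 1)).reverse).map (σB (n := n))).prod * σB i * σB i *
    ((((List.range' (i + 1) (j - i - 1)).reverse).map (σB (n := n))).prod)⁻¹

/-- Index deletion: strand indices above `m` are shifted down by one. -/
def dlB (m x : ℕ) : ℕ := if x < m then x else x - 1

/-- `pCond n m p` says that `p : PB_{n+2} → PB_{n+1}` (pure braid groups on `n+2` and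
`n+1` strands) is the strand-deletion homomorphism `p_m` deleting the `m`-th strand: on
band generators, `p_m(b_{ij}) = 1` if `m ∈ {i,j}` and otherwise `b_{ij}` with indices
above `m` shifted down by one. -/
def pCond (n m : ℕ) (p : PureBraid (n + 1) →* PureBraid n) : Prop :=
  ∀ i j : ℕ, i < j → j < n + 2 → ∀ x : PureBraid (n + 1),
    (x : Braid (n + 1)) = band (n + 1) i j →
      ((p x : PureBraid n) : Braid n) =
        if i = m ∨ j = m then 1 else band n (dlB m i) (dlB m j)

/-- The element `c_{i,i+1}^{-1} ⋯ c_{i,j-1}^{-1} c_{i,j}^2 c_{i,j-1} ⋯ c_{i,i+1}` of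
`G_n^3`, the image of the band generator `b_{ij}` under `φ`. -/
def phiW (n : ℕ) (i j : ℕ) : Gn3 n :=
  ((((List.range' (i + 1) (j - i - 1)).reverse).map (cc n i)).prod)⁻¹ * (cc n i j) ^ 2 *
    (((List.range' (i + 1) (j - i - 1)).reverse).map (cc n i)).prod

/-- `phiCond n φ` says that `φ : PB_{n+1} → G_{n+1}^3` (pure braids on `n+1` strands) is
the homomorphism `φ_{n+1}`: it sends each band generator `b_{ij}` to
`c_{i,i+1}^{-1} ⋯ c_{i,j-1}^{-1} c_{i,j}^2 c_{i,j-1} ⋯ c_{i,i+1}`. -/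
def phiCond (n : ℕ) (φ : PureBraid n →* Gn3 (n + 1)) : Prop :=
  ∀ i j : ℕ, i < j → j < n + 1 → ∀ x : PureBraid n,
    (x : Braid n) = band n i j → φ x = phiW (n + 1) i j


/-!
Deleting strand `m` and then inserting a straight strand at position `m` is an endomorphism
`ι_m ∘ p_m` of `PB_{n+2}` that fixes the band generators `b_ij` with `m ∉ {i, j}` and kills the
others. The composite `q_m ∘ φ` kills `φ(b_ij)` whenever `m ∈ {i, j}`: then `q_m (c_ij) = 1`,
because every `a_ijk` in `c_ij` carries the index `m`, and `φ(b_ij)` is a conjugate of `c_ij²`.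
Since the band generators generate the pure braid group, `q_m ∘ φ = q_m ∘ φ ∘ ι_m ∘ p_m`, and the
right-hand side vanishes on a Brunnian braid.

The band generators generate a normal subgroup `N` of `B_n`, and `B_n / N` is generated by
involutions satisfying the Coxeter relations of type `A`; the words `σ_k σ_{k-1} ⋯ σ_t` give coset
representatives, so `B_n / N` has at most `n!` elements, and the surjection `B_n / N → S_n` is a
bijection: `N = PB_n`. The deletion `p_m` is a coordinate of the homomorphism
`B_{n+2} → B_{n+1}^{n+2} ⋊ S_{n+2}` sending `σ_k` to the family of its strand deletions together
with the transposition `(k, k+1)`.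
-/

section GroupIdentities

variable {G : Type*} [Group G] {a b c s t x y : G}

theorem conj_conj_sq_of_braid (h : x * y * x = y * x * y) :
    x * (y * (x * x) * y⁻¹) * x⁻¹ = y * y := by
  calc x * (y * (x * x) * y⁻¹) * x⁻¹ = (x * y * x) * x * (y⁻¹ * x⁻¹) := by group
    _ = (y * x * y) * x * (y⁻¹ * x⁻¹) := by rw [h]
    _ = y * (x * y * x) * (y⁻¹ * x⁻¹) := by group
    _ = y * (y * x * y) * (y⁻¹ * x⁻¹) := by rw [h]
    _ = y * y := by group

theorem conj_mul_conj_of_commute (h : Commute s t) :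
    s * (t * b * t⁻¹) * s⁻¹ = t * (s * b * s⁻¹) * t⁻¹ := by
  calc s * (t * b * t⁻¹) * s⁻¹ = (s * t) * b * (s * t)⁻¹ := by group
    _ = (t * s) * b * (t * s)⁻¹ := by rw [h.eq]
    _ = t * (s * b * s⁻¹) * t⁻¹ := by group

theorem conj_conj_of_commute (h : Commute s a) :
    (s * t * s⁻¹) * a * (s * t * s⁻¹)⁻¹ = s * (t * a * t⁻¹) * s⁻¹ := by
  calc (s * t * s⁻¹) * a * (s * t * s⁻¹)⁻¹ = s * t * (s⁻¹ * (a * s)) * t⁻¹ * s⁻¹ := by group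
    _ = s * (t * a * t⁻¹) * s⁻¹ := by rw [← h.eq]; group

theorem Commute.conj_right (hu : Commute x a) (hv : Commute x b) : Commute x (a * b * a⁻¹) :=
  (hu.mul_right hv).mul_right hu.inv_right

theorem commute_conj_conj_of_braid (h : x * y * x = y * x * y) (hy : Commute y b) :
    Commute x (y * (x * b * x⁻¹) * y⁻¹) := by
  calc x * (y * (x * b * x⁻¹) * y⁻¹) = (x * y * x) * b * (x * y * x)⁻¹ * x := by group
    _ = y * x * (y * b) * y⁻¹ * x⁻¹ * y⁻¹ * x := by rw [h]; group
    _ = (y * (x * b * x⁻¹) * y⁻¹) * x := by rw [hy.eq]; group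

theorem braid_conj_left_of_braid (hbc : b * c * b = c * b * c) (hac : Commute a c)
    (hab : a * b * a = b * a * b) :
    (b * a * b⁻¹) * c * (b * a * b⁻¹) = c * (b * a * b⁻¹) * c := by
  have hcb : b⁻¹ * c * b = c * b * c⁻¹ := by
    calc b⁻¹ * c * b = b⁻¹ * (c * b * c) * c⁻¹ := by group
      _ = c * b * c⁻¹ := by rw [← hbc]; group
  have hca : c⁻¹ * a = a * c⁻¹ := hac.inv_right.eq.symm
  calc (b * a * b⁻¹) * c * (b * a * b⁻¹)
      = b * a * (b⁻¹ * c * b) * a * b⁻¹ := by group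
    _ = b * (a * c) * b * (c⁻¹ * a) * b⁻¹ := by rw [hcb]; group
    _ = b * c * (a * b * a) * c⁻¹ * b⁻¹ := by rw [hac.eq, hca]; group
    _ = (b * c * b) * a * b * c⁻¹ * b⁻¹ := by rw [hab]; group
    _ = c * b * (c * a) * b * c⁻¹ * b⁻¹ := by rw [hbc]; group
    _ = c * b * a * (c * b * c⁻¹) * b⁻¹ := by rw [← hac.eq]; group
    _ = c * (b * a * b⁻¹) * c := by rw [← hcb]; group

theorem braid_conj_right_of_braid (hac : Commute a c) (hab : a * b * a = b * a * b) :
    a * (c * b * c⁻¹) * a = (c * b * c⁻¹) * a * (c * b * c⁻¹) := by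
  have hcac : c⁻¹ * a * c = a := by rw [mul_assoc, hac.eq]; group
  calc a * (c * b * c⁻¹) * a = (a * c) * b * (c⁻¹ * a * c) * c⁻¹ := by group
    _ = c * (a * b * a) * c⁻¹ := by rw [hac.eq, hcac]; group
    _ = c * b * (c⁻¹ * a * c) * b * c⁻¹ := by rw [hab, hcac]; group
    _ = (c * b * c⁻¹) * a * (c * b * c⁻¹) := by group

end GroupIdentities

section BraidGenerators

variable {n : ℕ}

theorem σB_of {k : ℕ} (h : k < n) : (σB k : Braid n) = PresentedGroup.of ⟨k, h⟩ := dif_pos h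

theorem σB_of_le {k : ℕ} (h : n ≤ k) : (σB k : Braid n) = 1 := dif_neg (by omega)

theorem σB_commute {a b : ℕ} (h : a + 1 < b ∨ b + 1 < a) :
    Commute (σB a : Braid n) (σB b) := by
  wlog hab : a + 1 < b generalizing a b
  · exact (this h.symm (h.resolve_left hab)).symm
  by_cases hb : b < n
  · rw [σB_of (by omega : a < n), σB_of hb]
    exact commutatorElement_eq_one_iff_mul_comm.mp
      (PresentedGroup.one_of_mem (Or.inl ⟨⟨a, by omega⟩, ⟨b, hb⟩, hab, rfl⟩))
  · rw [σB_of_le (by omega : n ≤ b)]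
    exact Commute.one_right _

theorem σB_braid {a : ℕ} (h : a + 1 < n) :
    (σB a : Braid n) * σB (a + 1) * σB a = σB (a + 1) * σB a * σB (a + 1) := by
  rw [σB_of (by omega : a < n), σB_of h]
  exact mul_inv_eq_one.mp
    (PresentedGroup.one_of_mem (Or.inr ⟨⟨a, by omega⟩, ⟨a + 1, h⟩, rfl, rfl⟩))

theorem braidPerm_of (k : Fin n) :
    braidPerm n (PresentedGroup.of k) = Equiv.swap k.castSucc k.succ :=
  PresentedGroup.toGroup.of _

theorem braidPerm_σB {k : ℕ} (h : k < n) :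
    braidPerm n (σB k) = Equiv.swap (⟨k, by omega⟩ : Fin (n + 1)) ⟨k + 1, by omega⟩ := by
  rw [σB_of h, braidPerm_of]
  rfl

theorem band_self_succ (i : ℕ) : (band n i (i + 1) : Braid n) = σB i * σB i := by
  simp [band]

theorem band_succ {i j : ℕ} (hij : i < j) :
    (band n i (j + 1) : Braid n) = σB j * band n i j * (σB j)⁻¹ := by
  have hlen : j + 1 - i - 1 = (j - i - 1) + 1 := by omega
  have hlast : i + 1 + 1 * (j - i - 1) = j := by omega
  rw [band, band, hlen, List.range'_concat, hlast]
  simp only [List.reverse_append, List.reverse_cons, List.reverse_nil, List.nil_append,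
    List.singleton_append, List.map_cons, List.prod_cons]
  group

theorem braidPerm_band {i j : ℕ} (hij : i < j) (hj : j ≤ n) : braidPerm n (band n i j) = 1 := by
  induction j, hij using Nat.le_induction with
  | base => rw [band_self_succ, map_mul, braidPerm_σB (by omega), Equiv.swap_mul_self]
  | succ j hij ih => rw [band_succ hij, map_mul, map_mul, map_inv, ih (by omega)]; group

theorem σB_commute_band {k i j : ℕ} (hij : i < j) (hk : k + 1 < i ∨ j < k) :
    Commute (σB k : Braid n) (band n i j) := by
  induction j, hij using Nat.le_induction with
  | base =>
    rw [band_self_succ]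
    have hc : Commute (σB k : Braid n) (σB i) := σB_commute (by omega)
    exact hc.mul_right hc
  | succ j hij ih =>
    rw [band_succ hij]
    exact Commute.conj_right (σB_commute (by omega)) (ih (by omega))

end BraidGenerators

section BandSubgroup

theorem Subgroup.conj_mem_of_inv_conj_mem {G : Type*} [Group G] {H : Subgroup G} {s x : G}
    (hs : s * s ∈ H) (hx : s⁻¹ * x * s ∈ H) : s * x * s⁻¹ ∈ H := by
  have e : s * x * s⁻¹ = (s * s) * (s⁻¹ * x * s) * (s * s)⁻¹ := by group
  rw [e]
  exact mul_mem (mul_mem hs hx) (inv_mem hs)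

theorem Subgroup.inv_conj_mem_of_conj_mem {G : Type*} [Group G] {H : Subgroup G} {s x : G}
    (hs : s * s ∈ H) (hx : s * x * s⁻¹ ∈ H) : s⁻¹ * x * s ∈ H := by
  have e : s⁻¹ * x * s = (s * s)⁻¹ * (s * x * s⁻¹) * (s * s) := by group
  rw [e]
  exact mul_mem (mul_mem (inv_mem hs) hx) hs

variable {n : ℕ}

def bandSet (n : ℕ) : Set (Braid n) := {x | ∃ i j : ℕ, i < j ∧ j ≤ n ∧ x = band n i j}

def bandSubgroup (n : ℕ) : Subgroup (Braid n) := Subgroup.closure (bandSet n)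

theorem band_mem_bandSubgroup {i j : ℕ} (hij : i < j) (hj : j ≤ n) :
    band n i j ∈ bandSubgroup n :=
  Subgroup.subset_closure ⟨i, j, hij, hj, rfl⟩

theorem σB_sq_mem_bandSubgroup {k : ℕ} (hk : k < n) : σB k * σB k ∈ bandSubgroup n := by
  rw [← band_self_succ]
  exact band_mem_bandSubgroup (by omega) hk

theorem σB_conj_band_left {i j : ℕ} (hij : i + 1 < j) (hj : j ≤ n) :
    (σB i : Braid n) * band n i j * (σB i)⁻¹ = band n (i + 1) j := by
  induction j, hij using Nat.le_induction with
  | base =>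
    rw [band_succ (by omega), band_self_succ, band_self_succ]
    exact conj_conj_sq_of_braid (σB_braid (by omega))
  | succ j hij ih =>
    rw [band_succ (by omega), band_succ (by omega), ← ih (by omega),
      conj_mul_conj_of_commute (σB_commute (by omega))]

theorem σB_inv_conj_band_succ_left {i j : ℕ} (hij : i + 1 < j) (hj : j ≤ n) :
    (σB i : Braid n)⁻¹ * band n (i + 1) j * σB i = band n i j := by
  rw [← σB_conj_band_left hij hj]
  group

theorem σB_commute_band_of_lt_of_lt {i k j : ℕ} (hik : i < k) (hkj : k + 1 < j) (hj : j ≤ n) :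
    Commute (σB k : Braid n) (band n i j) := by
  induction j, hkj using Nat.le_induction with
  | base =>
    rw [band_succ (by omega), band_succ hik]
    exact commute_conj_conj_of_braid (σB_braid (by omega)) (σB_commute_band hik (by omega))
  | succ j hkj ih =>
    rw [band_succ (by omega)]
    exact Commute.conj_right (σB_commute (by omega)) (ih (by omega))

theorem σB_conj_band_mem {k i j : ℕ} (hk : k < n) (hij : i < j) (hj : j ≤ n) :
    σB k * band n i j * (σB k)⁻¹ ∈ bandSubgroup n := by
  have hsq := σB_sq_mem_bandSubgroup hk
  rcases (by omega : (k + 1 < i ∨ j < k) ∨ (i < k ∧ k + 1 < j) ∨ (k = i ∧ j = k + 1) ∨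
      k + 1 = i ∨ (k = i ∧ k + 1 < j) ∨ (i < k ∧ j = k + 1) ∨ k = j) with
    hfar | hmid | ⟨rfl, rfl⟩ | rfl | ⟨rfl, hkj⟩ | ⟨hik, rfl⟩ | rfl
  · rw [(σB_commute_band hij hfar).eq, mul_inv_cancel_right]
    exact band_mem_bandSubgroup hij hj
  · rw [(σB_commute_band_of_lt_of_lt hmid.1 hmid.2 hj).eq, mul_inv_cancel_right]
    exact band_mem_bandSubgroup hij hj
  · rw [band_self_succ, mul_assoc, mul_assoc, mul_inv_cancel, mul_one]
    exact hsq
  · apply Subgroup.conj_mem_of_inv_conj_mem hsq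
    rw [σB_inv_conj_band_succ_left hij hj]
    exact band_mem_bandSubgroup (by omega) hj
  · rw [σB_conj_band_left hkj hj]
    exact band_mem_bandSubgroup (by omega) hj
  · apply Subgroup.conj_mem_of_inv_conj_mem hsq
    have e : (σB k)⁻¹ * band n i (k + 1) * σB k = band n i k := by rw [band_succ hik]; group
    rw [e]
    exact band_mem_bandSubgroup hik (by omega)
  · rw [← band_succ hij]
    exact band_mem_bandSubgroup (by omega) hk

theorem σB_conj_mem_bandSubgroup {k : ℕ} (hk : k < n) {x : Braid n} (hx : x ∈ bandSubgroup n) :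
    σB k * x * (σB k)⁻¹ ∈ bandSubgroup n := by
  have hle : bandSubgroup n ≤ (bandSubgroup n).comap (MulAut.conj (σB k)).toMonoidHom := by
    refine (Subgroup.closure_le _).2 ?_
    rintro _ ⟨i, j, hij, hj, rfl⟩
    exact σB_conj_band_mem hk hij hj
  exact hle hx

instance bandSubgroup_normal : (bandSubgroup n).Normal := by
  rw [← Subgroup.normalizer_eq_top_iff, eq_top_iff, ← PresentedGroup.closure_range_of,
    Subgroup.closure_le]
  rintro _ ⟨k, rfl⟩
  have hsq := σB_sq_mem_bandSubgroup k.isLt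
  rw [← σB_of k.isLt]
  refine Subgroup.mem_normalizer_iff.2 fun x => ⟨σB_conj_mem_bandSubgroup k.isLt, fun hx => ?_⟩
  have e : x = (σB k)⁻¹ * (σB k * x * (σB k)⁻¹) * σB k := by group
  rw [e]
  exact Subgroup.inv_conj_mem_of_conj_mem hsq (σB_conj_mem_bandSubgroup k.isLt hx)

end BandSubgroup

section CoxeterTypeA

variable {G : Type*} [Group G]

structure CoxeterRelsA (g : ℕ → G) (N : ℕ) : Prop where
  sq : ∀ i < N, g i * g i = 1
  braid : ∀ i, i + 1 < N → g i * g (i + 1) * g i = g (i + 1) * g i * g (i + 1)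
  comm : ∀ i j, i + 1 < j → j < N → Commute (g i) (g j)

def descProd (g : ℕ → G) (k t : ℕ) : G := ((List.range' t (k + 1 - t)).reverse.map g).prod

variable {g : ℕ → G} {N : ℕ}

theorem descProd_succ_self (g : ℕ → G) (k : ℕ) : descProd g k (k + 1) = 1 := by
  simp [descProd]

theorem descProd_eq_descProd_succ_mul (g : ℕ → G) {k t : ℕ} (ht : t ≤ k) :
    descProd g k t = descProd g k (t + 1) * g t := by
  rw [descProd, descProd, show k + 1 - t = (k - t) + 1 by omega,
    show k + 1 - (t + 1) = k - t by omega, List.range'_succ]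
  simp

namespace CoxeterRelsA

variable (hg : CoxeterRelsA g N)
include hg

theorem commute_descProd {a k t : ℕ} (hat : a + 2 ≤ t) (hk : k < N) :
    Commute (g a) (descProd g k t) := by
  refine Commute.list_prod_right _ _ fun y hy => ?_
  obtain ⟨s, hs, rfl⟩ := List.mem_map.mp hy
  rw [List.mem_reverse, List.mem_range'_1] at hs
  exact hg.comm a s (by omega) (by omega)

theorem descProd_mul_succ {b k t : ℕ} (htb : t ≤ b) (hbk : b + 1 ≤ k) (hk : k < N) :
    descProd g k t * g (b + 1) = g b * descProd g k t := by
  obtain ⟨r, rfl⟩ : ∃ r, b = t + r := ⟨b - t, by omega⟩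
  induction r generalizing t with
  | zero =>
    have hcomm := hg.commute_descProd (a := t) (t := t + 2) (by omega) hk
    rw [descProd_eq_descProd_succ_mul g (show t ≤ k by omega),
      descProd_eq_descProd_succ_mul g (show t + 1 ≤ k by omega)]
    calc descProd g k (t + 1 + 1) * g (t + 1) * g t * g (t + 0 + 1)
        = descProd g k (t + 2) * (g t * g (t + 1) * g t) := by
          rw [hg.braid t (by omega)]; group
      _ = g t * (descProd g k (t + 1 + 1) * g (t + 1) * g t) := by
          rw [← mul_assoc, ← mul_assoc, ← hcomm.eq]; group
  | succ r ih =>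
    have hb : t + (r + 1) = t + 1 + r := by omega
    rw [descProd_eq_descProd_succ_mul g (show t ≤ k by omega), mul_assoc,
      (hg.comm t (t + (r + 1) + 1) (by omega) (by omega)).eq, ← mul_assoc, hb,
      ih (by omega) (by omega), mul_assoc]

theorem exists_coset_mul {k t a : ℕ} (hk : k < N) (htk : t ≤ k + 1) (hak : a ≤ k) {h : G}
    (hh : h ∈ Subgroup.closure (g '' Set.Iio k)) :
    ∃ t' ≤ k + 1, ∃ h' ∈ Subgroup.closure (g '' Set.Iio k),
      h * descProd g k t * g a = h' * descProd g k t' := by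
  rcases (by omega : a + 2 ≤ t ∨ a + 1 = t ∨ a = t ∨ t < a) with hat | rfl | rfl | hta
  · refine ⟨t, htk, h * g a,
      mul_mem hh (Subgroup.subset_closure ⟨a, Set.mem_Iio.2 (by omega), rfl⟩), ?_⟩
    rw [mul_assoc, mul_assoc, (hg.commute_descProd hat hk).eq]
  · exact ⟨a, by omega, h, hh, by rw [descProd_eq_descProd_succ_mul g hak, mul_assoc]⟩
  · refine ⟨a + 1, by omega, h, hh, ?_⟩
    rw [descProd_eq_descProd_succ_mul g hak, mul_assoc, mul_assoc, hg.sq a (by omega), mul_one]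
  · obtain ⟨b, rfl⟩ : ∃ b, a = b + 1 := ⟨a - 1, by omega⟩
    refine ⟨t, htk, h * g b,
      mul_mem hh (Subgroup.subset_closure ⟨b, Set.mem_Iio.2 (by omega), rfl⟩), ?_⟩
    rw [mul_assoc, hg.descProd_mul_succ (by omega) hak hk, mul_assoc]

theorem exists_coset_of_mem_closure {k : ℕ} (hk : k < N) {x : G}
    (hx : x ∈ Subgroup.closure (g '' Set.Iio (k + 1))) :
    ∃ t ≤ k + 1, ∃ h ∈ Subgroup.closure (g '' Set.Iio k), x = h * descProd g k t := by
  induction hx using Subgroup.closure_induction_right with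
  | one => exact ⟨k + 1, le_rfl, 1, one_mem _, by rw [descProd_succ_self, one_mul]⟩
  | mul_right x _ y hy ih =>
    obtain ⟨a, ha, rfl⟩ := hy
    obtain ⟨t, ht, h, hh, rfl⟩ := ih
    exact hg.exists_coset_mul hk ht (Nat.lt_succ_iff.mp ha) hh
  | mul_inv_cancel x _ y hy ih =>
    obtain ⟨a, ha, rfl⟩ := hy
    obtain ⟨t, ht, h, hh, rfl⟩ := ih
    rw [inv_eq_of_mul_eq_one_right (hg.sq a (ha.trans_le hk))]
    exact hg.exists_coset_mul hk ht (Nat.lt_succ_iff.mp ha) hh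

theorem exists_finset_closure_subset {k : ℕ} (hk : k ≤ N) :
    ∃ s : Finset G, (Subgroup.closure (g '' Set.Iio k) : Set G) ⊆ s ∧
      s.card ≤ (k + 1).factorial := by
  classical
  induction k with
  | zero => exact ⟨{1}, by simp, by simp⟩
  | succ k ih =>
    obtain ⟨s, hs, hcard⟩ := ih (by omega)
    refine ⟨(Finset.range (k + 2) ×ˢ s).image fun p => p.2 * descProd g k p.1, ?_, ?_⟩
    · intro x hx
      obtain ⟨t, ht, h, hh, rfl⟩ := hg.exists_coset_of_mem_closure (by omega) hx
      exact Finset.mem_image.2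
        ⟨(t, h), Finset.mem_product.2 ⟨Finset.mem_range.2 (by omega), hs hh⟩, rfl⟩
    · calc _ ≤ (Finset.range (k + 2) ×ˢ s).card := Finset.card_image_le
        _ ≤ (k + 2) * (k + 1).factorial := by rw [Finset.card_product, Finset.card_range]; gcongr
        _ = (k + 1 + 1).factorial := (Nat.factorial_succ (k + 1)).symm

end CoxeterRelsA

end CoxeterTypeA

section PureBraidGeneration

variable {n : ℕ}

theorem coxeterRelsA_mk_σB :
    CoxeterRelsA (fun k => ((σB k : Braid n) : Braid n ⧸ bandSubgroup n)) n where
  sq i hi := by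
    rw [← QuotientGroup.mk_mul, QuotientGroup.eq_one_iff]
    exact σB_sq_mem_bandSubgroup hi
  braid i hi := by simp only [← QuotientGroup.mk_mul, σB_braid hi]
  comm i j hij _ := (σB_commute (Or.inl hij)).map (QuotientGroup.mk' (bandSubgroup n))

theorem closure_σB_eq_top : Subgroup.closure ((σB · : ℕ → Braid n) '' Set.Iio n) = ⊤ := by
  rw [← PresentedGroup.closure_range_of]
  congr 1
  ext x
  constructor
  · rintro ⟨k, hk, rfl⟩
    exact ⟨⟨k, hk⟩, (σB_of hk).symm⟩
  · rintro ⟨k, rfl⟩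
    exact ⟨k, k.isLt, σB_of k.isLt⟩

theorem finite_quotient_bandSubgroup_and_card_le :
    Finite (Braid n ⧸ bandSubgroup n) ∧
      Nat.card (Braid n ⧸ bandSubgroup n) ≤ (n + 1).factorial := by
  have htop : Subgroup.closure
      ((fun k => ((σB k : Braid n) : Braid n ⧸ bandSubgroup n)) '' Set.Iio n) = ⊤ := by
    have himage : (fun k => ((σB k : Braid n) : Braid n ⧸ bandSubgroup n)) '' Set.Iio n =
        QuotientGroup.mk' (bandSubgroup n) '' ((σB ·) '' Set.Iio n) := by
      rw [Set.image_image]; rfl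
    rw [himage, ← MonoidHom.map_closure, closure_σB_eq_top,
      Subgroup.map_top_of_surjective _ (QuotientGroup.mk'_surjective _)]
  obtain ⟨s, hs, hcard⟩ := coxeterRelsA_mk_σB.exists_finset_closure_subset le_rfl
  rw [htop, Subgroup.coe_top] at hs
  refine ⟨Set.finite_univ_iff.mp (s.finite_toSet.subset hs), ?_⟩
  calc Nat.card (Braid n ⧸ bandSubgroup n)
        = (Set.univ : Set (Braid n ⧸ bandSubgroup n)).ncard := (Set.ncard_univ _).symm
    _ ≤ (s : Set (Braid n ⧸ bandSubgroup n)).ncard := Set.ncard_le_ncard hs s.finite_toSet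
    _ ≤ (n + 1).factorial := by rwa [Set.ncard_coe_finset]

theorem braidPerm_surjective : Function.Surjective (braidPerm n) := by
  intro π
  have hle : Submonoid.closure (Set.range fun i : Fin n => Equiv.swap i.castSucc i.succ) ≤
      MonoidHom.mrange (braidPerm n) := by
    rw [Submonoid.closure_le]
    rintro _ ⟨i, rfl⟩
    exact ⟨PresentedGroup.of i, braidPerm_of i⟩
  rw [Equiv.Perm.mclosure_swap_castSucc_succ] at hle
  exact hle (Submonoid.mem_top π)

theorem bandSubgroup_eq_pureBraid : bandSubgroup n = PureBraid n := by
  have hle : bandSubgroup n ≤ (braidPerm n).ker := by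
    rw [bandSubgroup, Subgroup.closure_le]
    rintro _ ⟨i, j, hij, hj, rfl⟩
    exact braidPerm_band hij hj
  refine le_antisymm hle fun x hx => ?_
  let f := QuotientGroup.lift (bandSubgroup n) (braidPerm n) hle
  have hf_surj : Function.Surjective f := fun π => by
    obtain ⟨x, rfl⟩ := braidPerm_surjective π
    exact ⟨x, rfl⟩
  obtain ⟨hfin, hcard⟩ := finite_quotient_bandSubgroup_and_card_le (n := n)
  have hf_inj : Function.Injective f := by
    refine ((Nat.bijective_iff_surjective_and_card f).2 ⟨hf_surj, le_antisymm ?_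
      (Nat.card_le_card_of_surjective f hf_surj)⟩).1
    rwa [Nat.card_perm, Nat.card_fin]
  rw [← QuotientGroup.eq_one_iff]
  exact hf_inj (hx.trans (map_one f).symm)

theorem PureBraid.closure_band_eq_top :
    Subgroup.closure (((↑) : PureBraid n → Braid n) ⁻¹' bandSet n) = ⊤ := by
  apply Subgroup.map_injective (PureBraid n).subtype_injective
  rw [MonoidHom.map_closure, ← MonoidHom.range_eq_map, Subgroup.range_subtype,
    Subgroup.coe_subtype, Set.image_preimage_eq_of_subset, ← bandSubgroup_eq_pureBraid,
    bandSubgroup]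
  rintro _ ⟨i, j, hij, hj, rfl⟩
  exact ⟨⟨_, braidPerm_band hij hj⟩, rfl⟩

theorem PureBraid.hom_ext {H : Type*} [Group H] {f f' : PureBraid n →* H}
    (h : ∀ i j, i < j → j ≤ n → ∀ x : PureBraid n,
      (x : Braid n) = band n i j → f x = f' x) :
    f = f' :=
  MonoidHom.eq_of_eqOn_dense PureBraid.closure_band_eq_top fun x ⟨i, j, hij, hj, hx⟩ =>
    h i j hij hj x hx

end PureBraidGeneration

section StrandDeletion

variable {n : ℕ}

theorem dlB_of_lt {m x : ℕ} (h : x < m) : dlB m x = x := if_pos h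

theorem dlB_of_le {m x : ℕ} (h : m ≤ x) : dlB m x = x - 1 := if_neg (by omega)

def deleteσ (n k v : ℕ) : Braid n := if v = k ∨ v = k + 1 then 1 else σB (dlB v k)

theorem σB_braid_of_eq {a b : ℕ} (hab : b = a + 1) (hb : b < n) :
    (σB a : Braid n) * σB b * σB a = σB b * σB a * σB b := by
  subst hab; exact σB_braid hb

@[simp]
theorem deleteσ_self (k : ℕ) : deleteσ n k k = 1 := if_pos (Or.inl rfl)

@[simp]
theorem deleteσ_succ (k : ℕ) : deleteσ n k (k + 1) = 1 := if_pos (Or.inr rfl)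

theorem deleteσ_of_lt {k v : ℕ} (h : k + 1 < v) : deleteσ n k v = σB k := by
  rw [deleteσ, if_neg (by omega), dlB, if_pos (by omega)]

theorem deleteσ_of_gt {k v : ℕ} (h : v < k) : deleteσ n k v = σB (k - 1) := by
  rw [deleteσ, if_neg (by omega), dlB, if_neg (by omega)]

theorem deleteσ_comm {i j v : ℕ} (hij : i + 1 < j) :
    deleteσ n i v * deleteσ n j (Equiv.swap i (i + 1) v) =
      deleteσ n j v * deleteσ n i (Equiv.swap j (j + 1) v) := by
  rcases (by omega : v = i ∨ v = i + 1 ∨ v = j ∨ v = j + 1 ∨ v < i ∨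
      (i + 1 < v ∧ v < j) ∨ j + 1 < v) with rfl | rfl | rfl | rfl | hv | hv | hv <;>
  simp (disch := omega) only [Equiv.swap_apply_left, Equiv.swap_apply_right,
    Equiv.swap_apply_of_ne_of_ne, deleteσ_self, deleteσ_succ, deleteσ_of_lt, deleteσ_of_gt,
    one_mul, mul_one]
  all_goals exact (σB_commute (by omega)).eq

theorem deleteσ_braid {i v : ℕ} (hi : i + 1 < n + 1) (hv : v < n + 2) :
    deleteσ n i v * deleteσ n (i + 1) (Equiv.swap i (i + 1) v) *
        deleteσ n i (Equiv.swap (i + 1) (i + 1 + 1) (Equiv.swap i (i + 1) v)) =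
      deleteσ n (i + 1) v * deleteσ n i (Equiv.swap (i + 1) (i + 1 + 1) v) *
        deleteσ n (i + 1) (Equiv.swap i (i + 1) (Equiv.swap (i + 1) (i + 1 + 1) v)) := by
  rcases (by omega : v = i ∨ v = i + 1 ∨ v = i + 1 + 1 ∨ v < i ∨ i + 1 + 1 < v) with
    rfl | rfl | rfl | hv' | hv' <;>
  simp (disch := omega) only [Equiv.swap_apply_left, Equiv.swap_apply_right,
    Equiv.swap_apply_of_ne_of_ne, deleteσ_self, deleteσ_succ, deleteσ_of_lt, deleteσ_of_gt,
    one_mul, mul_one, Nat.add_sub_cancel]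
  all_goals exact σB_braid_of_eq (by omega) (by omega)

def deleteBand (n m i j : ℕ) : Braid n :=
  if i = m ∨ j = m then 1 else band n (dlB m i) (dlB m j)

theorem σB_mul_self_eq_band {a b : ℕ} (hb : b = a + 1) :
    (σB a : Braid n) * σB a = band n a b := by
  subst hb; exact (band_self_succ a).symm

theorem σB_conj_band_eq_band {a b c d : ℕ} (hbc : b < c) (hc : c = a) (hd : d = a + 1) :
    (σB a : Braid n) * band n b c * (σB a)⁻¹ = band n b d := by
  subst hc hd; exact (band_succ hbc).symm

theorem deleteσ_mul_deleteσ_swap {i v : ℕ} :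
    deleteσ n i v * deleteσ n i (Equiv.swap i (i + 1) v) = deleteBand n v i (i + 1) := by
  rcases (by omega : v = i ∨ v = i + 1 ∨ v < i ∨ i + 1 < v) with rfl | rfl | hv | hv <;>
  simp (disch := omega) only [Equiv.swap_apply_left, Equiv.swap_apply_right,
    Equiv.swap_apply_of_ne_of_ne, deleteσ_self, deleteσ_succ, deleteσ_of_lt, deleteσ_of_gt,
    deleteBand, if_neg, dlB_of_lt, dlB_of_le, true_or, or_true, if_true, one_mul,
    Nat.add_sub_cancel]
  all_goals exact σB_mul_self_eq_band (by omega)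

theorem deleteσ_conj_deleteBand {i j v : ℕ} (hij : i < j) :
    deleteσ n j v * deleteBand n (Equiv.swap j (j + 1) v) i j * (deleteσ n j v)⁻¹ =
      deleteBand n v i (j + 1) := by
  rcases (by omega : v = j ∨ v = j + 1 ∨ v = i ∨ v < i ∨ (i < v ∧ v < j) ∨
      j + 1 < v) with
    rfl | rfl | rfl | hv | hv | hv <;>
  simp (disch := omega) only [Equiv.swap_apply_left, Equiv.swap_apply_right,
    Equiv.swap_apply_of_ne_of_ne, deleteσ_self, deleteσ_succ, deleteσ_of_lt, deleteσ_of_gt,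
    deleteBand, if_neg, dlB_of_lt, dlB_of_le, true_or, or_true, if_true, one_mul,
    mul_one, inv_one, mul_inv_cancel, Nat.add_sub_cancel]
  all_goals exact σB_conj_band_eq_band (by omega) (by omega) (by omega)

end StrandDeletion

section DeletionGroup

variable {n : ℕ}

def permuteCoords (n : ℕ) : Equiv.Perm (Fin (n + 2)) →* MulAut (Fin (n + 2) → Braid n) where
  toFun π := MulEquiv.arrowCongr π (MulEquiv.refl _)
  map_one' := by ext; rfl
  map_mul' _ _ := by ext; rfl

theorem permuteCoords_apply (π : Equiv.Perm (Fin (n + 2))) (f : Fin (n + 2) → Braid n)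
    (v : Fin (n + 2)) : permuteCoords n π f v = f (π⁻¹ v) := rfl

/-- `(deletionHom n x).left v` is `x` with the strand starting at position `v` removed, and
`(deletionHom n x).right` is the permutation of `x`. -/
abbrev DeletionGroup (n : ℕ) :=
  (Fin (n + 2) → Braid n) ⋊[permuteCoords n] Equiv.Perm (Fin (n + 2))

def deletionGen (k : Fin (n + 1)) : DeletionGroup n :=
  ⟨fun v => deleteσ n k v, Equiv.swap k.castSucc k.succ⟩

theorem Fin.val_swap_apply {k : ℕ} (a b v : Fin k) :
    (Equiv.swap a b v : ℕ) = Equiv.swap (a : ℕ) (b : ℕ) (v : ℕ) :=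
  (Fin.val_injective.swap_apply a b v).symm

theorem val_swap_castSucc_succ (k : Fin (n + 1)) (v : Fin (n + 2)) :
    (Equiv.swap k.castSucc k.succ v : ℕ) = Equiv.swap (k : ℕ) (k + 1) (v : ℕ) := by
  rw [Fin.val_swap_apply, Fin.val_castSucc, Fin.val_succ]

theorem mul_deletionGen_left (x : DeletionGroup n) (k : Fin (n + 1)) (v : Fin (n + 2)) :
    (x * deletionGen k).left v = x.left v * deleteσ n k (x.right⁻¹ v) := rfl

theorem mul_deletionGen_right (x : DeletionGroup n) (k : Fin (n + 1)) :
    (x * deletionGen k).right = x.right * Equiv.swap k.castSucc k.succ := rfl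

theorem deletionGen_conj_left (k : Fin (n + 1)) (f : Fin (n + 2) → Braid n) (v : Fin (n + 2)) :
    (deletionGen k * ⟨f, 1⟩ * (deletionGen k)⁻¹).left v =
      deleteσ n k v * f (Equiv.swap k.castSucc k.succ v) * (deleteσ n k v)⁻¹ := by
  simp [deletionGen, permuteCoords_apply]

theorem deletionGen_comm {i j : Fin (n + 1)} (hij : (i : ℕ) + 1 < j) :
    deletionGen (n := n) i * deletionGen j = deletionGen j * deletionGen i := by
  refine SemidirectProduct.ext (funext fun v => ?_) ?_
  · rw [mul_deletionGen_left, mul_deletionGen_left]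
    simp only [deletionGen, Equiv.swap_inv, val_swap_castSucc_succ]
    exact deleteσ_comm hij
  · have h := congrArg (braidPerm (n + 1)) (σB_commute (n := n + 1) (Or.inl hij)).eq
    rwa [σB_of i.isLt, σB_of j.isLt, map_mul, map_mul, braidPerm_of, braidPerm_of] at h

theorem deletionGen_braid {i j : Fin (n + 1)} (hij : (i : ℕ) + 1 = j) :
    deletionGen (n := n) i * deletionGen j * deletionGen i =
      deletionGen j * deletionGen i * deletionGen j := by
  obtain ⟨j, hj⟩ := j
  dsimp only at hij
  subst hij
  refine SemidirectProduct.ext (funext fun v => ?_) ?_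
  · rw [mul_deletionGen_left, mul_deletionGen_left, mul_deletionGen_left,
      mul_deletionGen_left, mul_deletionGen_right, mul_deletionGen_right]
    simp only [deletionGen, mul_inv_rev, Equiv.swap_inv, Equiv.Perm.mul_apply,
      val_swap_castSucc_succ]
    exact deleteσ_braid (by omega) v.isLt
  · have h := congrArg (braidPerm (n + 1)) (σB_braid (n := n + 1) (a := i) (by omega))
    rwa [σB_of i.isLt, σB_of (by omega : (i : ℕ) + 1 < n + 1), map_mul, map_mul, map_mul,
      map_mul, braidPerm_of, braidPerm_of] at h

def deletionHom (n : ℕ) : Braid (n + 1) →* DeletionGroup n :=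
  PresentedGroup.toGroup (f := deletionGen) <| by
    rintro r (⟨i, j, hij, rfl⟩ | ⟨i, j, hij, rfl⟩) <;>
      simp only [map_mul, map_inv, FreeGroup.lift_apply_of]
    · exact commutatorElement_eq_one_iff_mul_comm.mpr (deletionGen_comm hij)
    · exact mul_inv_eq_one.mpr (deletionGen_braid hij)

end DeletionGroup

section PureDeletion

variable {n : ℕ}

theorem deletionHom_σB {k : ℕ} (hk : k < n + 1) :
    deletionHom n (σB k) = deletionGen ⟨k, hk⟩ := by
  rw [σB_of hk]
  exact PresentedGroup.toGroup.of _

theorem deletionHom_right (x : Braid (n + 1)) :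
    (deletionHom n x).right = braidPerm (n + 1) x := by
  have h : SemidirectProduct.rightHom.comp (deletionHom n) = braidPerm (n + 1) :=
    PresentedGroup.ext fun k => by
      rw [MonoidHom.comp_apply, deletionHom, PresentedGroup.toGroup.of, braidPerm_of]
      rfl
  exact DFunLike.congr_fun h x

theorem deletionHom_band {i j : ℕ} (hij : i < j) (hj : j ≤ n + 1) :
    deletionHom n (band (n + 1) i j) = ⟨fun v => deleteBand n v i j, 1⟩ := by
  induction j, hij using Nat.le_induction with
  | base =>
    rw [band_self_succ, map_mul, deletionHom_σB (by omega)]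
    refine SemidirectProduct.ext (funext fun v => ?_) (Equiv.swap_mul_self _ _)
    rw [mul_deletionGen_left]
    simp only [deletionGen, Equiv.swap_inv, val_swap_castSucc_succ]
    exact deleteσ_mul_deleteσ_swap
  | succ j hij ih =>
    rw [band_succ hij, map_mul, map_mul, map_inv, ih (by omega), deletionHom_σB (by omega)]
    refine SemidirectProduct.ext (funext fun v => ?_) (by simp [deletionGen])
    rw [deletionGen_conj_left, val_swap_castSucc_succ]
    exact deleteσ_conj_deleteBand hij

def deletionAt (m : Fin (n + 2)) : PureBraid (n + 1) →* Braid n where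
  toFun x := (deletionHom n x).left m
  map_one' := by rw [OneMemClass.coe_one, map_one]; rfl
  map_mul' x y := by
    rw [Subgroup.coe_mul, map_mul, SemidirectProduct.mul_left, Pi.mul_apply,
      permuteCoords_apply, deletionHom_right, MonoidHom.mem_ker.mp x.2, inv_one,
      Equiv.Perm.one_apply]

theorem deletionAt_of_eq_band (m : Fin (n + 2)) {i j : ℕ} (hij : i < j) (hj : j ≤ n + 1)
    {x : PureBraid (n + 1)} (hx : (x : Braid (n + 1)) = band (n + 1) i j) :
    deletionAt m x = deleteBand n m i j := by
  rw [deletionAt, MonoidHom.coe_mk, OneHom.coe_mk, hx, deletionHom_band hij hj]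

theorem deletionAt_mem_pureBraid (m : Fin (n + 2)) (x : PureBraid (n + 1)) :
    deletionAt m x ∈ PureBraid n := by
  have h : (PureBraid n).comap (deletionAt m) = ⊤ := by
    rw [eq_top_iff, ← PureBraid.closure_band_eq_top, Subgroup.closure_le]
    rintro x ⟨i, j, hij, hj, hx⟩
    rw [SetLike.mem_coe, Subgroup.mem_comap, deletionAt_of_eq_band m hij hj hx, deleteBand]
    split_ifs
    · exact one_mem _
    · exact braidPerm_band (by simp only [dlB]; split_ifs <;> omega)
        (by simp only [dlB]; split_ifs <;> omega)
  rw [← Subgroup.mem_comap, h]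
  exact Subgroup.mem_top x

def pureDeletion (m : Fin (n + 2)) : PureBraid (n + 1) →* PureBraid n :=
  (deletionAt m).codRestrict (PureBraid n) (deletionAt_mem_pureBraid m)

theorem pCond_pureDeletion {m : ℕ} (hm : m < n + 2) : pCond n m (pureDeletion ⟨m, hm⟩) :=
  fun _ _ hij hj _ hx => deletionAt_of_eq_band _ hij (by omega) hx

end PureDeletion

section StrandInsertion

variable {n : ℕ}

/-- Inserting a straight strand at position `m` turns the crossing `σ_{m-1}` into
`σ_m σ_{m-1} σ_m⁻¹`, which passes in front of the new strand. -/
def insertσ (n m k : ℕ) : Braid (n + 1) :=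
  if k + 1 < m then σB k else if k + 1 = m then σB m * σB (m - 1) * (σB m)⁻¹ else σB (k + 1)

theorem insertσ_of_lt {m k : ℕ} (h : k + 1 < m) : insertσ n m k = σB k := if_pos h

theorem insertσ_of_eq {m k : ℕ} (h : k + 1 = m) :
    insertσ n m k = σB m * σB (m - 1) * (σB m)⁻¹ := by
  rw [insertσ, if_neg (by omega), if_pos h]

theorem insertσ_of_gt {m k : ℕ} (h : m < k + 1) : insertσ n m k = σB (k + 1) := by
  rw [insertσ, if_neg (by omega), if_neg (by omega)]

theorem insertσ_commute {m i j : ℕ} (hij : i + 1 < j) :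
    Commute (insertσ n m i) (insertσ n m j) := by
  unfold insertσ
  split_ifs <;>
    first
    | (exfalso; omega)
    | exact σB_commute (by omega)
    | exact Commute.conj_right (σB_commute (by omega)) (σB_commute (by omega))
    | exact (Commute.conj_right (σB_commute (by omega)) (σB_commute (by omega))).symm

theorem insertσ_braid {m i : ℕ} (h : i + 1 < n) :
    insertσ n m i * insertσ n m (i + 1) * insertσ n m i =
      insertσ n m (i + 1) * insertσ n m i * insertσ n m (i + 1) := by
  rcases (by omega : i + 2 < m ∨ i + 2 = m ∨ i + 1 = m ∨ m < i + 1) with hm | hm | hm | hm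
  · rw [insertσ_of_lt (by omega), insertσ_of_lt hm]
    exact σB_braid (by omega)
  · rw [insertσ_of_lt (by omega), insertσ_of_eq hm]
    exact braid_conj_right_of_braid (σB_commute (by omega)) (σB_braid_of_eq (by omega) (by omega))
  · rw [insertσ_of_eq hm, insertσ_of_gt (by omega)]
    exact braid_conj_left_of_braid (σB_braid_of_eq (by omega) (by omega)) (σB_commute (by omega))
      (σB_braid_of_eq (by omega) (by omega))
  · rw [insertσ_of_gt hm, insertσ_of_gt (by omega)]
    exact σB_braid (by omega)

def insertionHom (n m : ℕ) : Braid n →* Braid (n + 1) :=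
  PresentedGroup.toGroup (f := fun k : Fin n => insertσ n m k) <| by
    rintro r (⟨i, j, hij, rfl⟩ | ⟨i, j, hij, rfl⟩) <;>
      simp only [map_mul, map_inv, FreeGroup.lift_apply_of]
    · exact commutatorElement_eq_one_iff_mul_comm.mpr (insertσ_commute hij).eq
    · rw [← hij]
      exact mul_inv_eq_one.mpr (insertσ_braid (by omega))

theorem insertionHom_σB {m k : ℕ} (h : k < n) : insertionHom n m (σB k) = insertσ n m k := by
  rw [σB_of h]
  exact PresentedGroup.toGroup.of _

def insIdx (m x : ℕ) : ℕ := if x < m then x else x + 1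

theorem insIdx_of_lt {m x : ℕ} (h : x < m) : insIdx m x = x := if_pos h

theorem insIdx_of_le {m x : ℕ} (h : m ≤ x) : insIdx m x = x + 1 := if_neg (by omega)

theorem insertionHom_band {m a b : ℕ} (hab : a < b) (hb : b ≤ n) :
    insertionHom n m (band n a b) = band (n + 1) (insIdx m a) (insIdx m b) := by
  induction b, hab using Nat.le_induction with
  | base =>
    rw [band_self_succ, map_mul, insertionHom_σB (by omega)]
    rcases (by omega : a + 1 < m ∨ a + 1 = m ∨ m < a + 1) with hm | hm | hm
    · rw [insertσ_of_lt hm, insIdx_of_lt (by omega), insIdx_of_lt hm, band_self_succ]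
    · rw [insertσ_of_eq hm, insIdx_of_lt (by omega), insIdx_of_le hm.ge, band_succ (by omega),
        band_self_succ, ← hm, Nat.add_sub_cancel]
      group
    · rw [insertσ_of_gt hm, insIdx_of_le (by omega), insIdx_of_le (by omega), band_self_succ]
  | succ b hab ih =>
    rw [band_succ hab, map_mul, map_mul, map_inv, ih (by omega), insertionHom_σB (by omega)]
    rcases (by omega : b + 1 < m ∨ b + 1 = m ∨ m < b + 1) with hm | hm | hm
    · rw [insertσ_of_lt hm, insIdx_of_lt (by omega), insIdx_of_lt (by omega),
        insIdx_of_lt hm, band_succ (by omega)]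
    · subst hm
      have hc : Commute (σB (b + 1) : Braid (n + 1)) (band (n + 1) (insIdx (b + 1) a) b) :=
        σB_commute_band (by simp only [insIdx]; split_ifs <;> omega) (Or.inr (by omega))
      rw [insertσ_of_eq rfl, insIdx_of_lt (x := b) (by omega), insIdx_of_le (x := b + 1) le_rfl,
        Nat.add_sub_cancel, conj_conj_of_commute hc,
        band_succ (by simp only [insIdx]; split_ifs <;> omega),
        band_succ (by simp only [insIdx]; split_ifs <;> omega)]
    · rw [insertσ_of_gt hm, insIdx_of_le (x := b) (by omega),
        insIdx_of_le (x := b + 1) (by omega)]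
      exact (band_succ (by simp only [insIdx]; split_ifs <;> omega)).symm

theorem insIdx_lt_insIdx {m a b : ℕ} (hab : a < b) : insIdx m a < insIdx m b := by
  simp only [insIdx]; split_ifs <;> omega

theorem insertionHom_mem_pureBraid (m : ℕ) (x : PureBraid n) :
    insertionHom n m x ∈ PureBraid (n + 1) := by
  have h : PureBraid n ≤ (PureBraid (n + 1)).comap (insertionHom n m) := by
    rw [← bandSubgroup_eq_pureBraid, bandSubgroup, Subgroup.closure_le]
    rintro _ ⟨a, b, hab, hb, rfl⟩
    rw [SetLike.mem_coe, Subgroup.mem_comap, insertionHom_band hab hb]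
    exact braidPerm_band (insIdx_lt_insIdx hab) (by simp only [insIdx]; split_ifs <;> omega)
  exact h x.2

def pureInsertion (m : ℕ) : PureBraid n →* PureBraid (n + 1) :=
  ((insertionHom n m).comp (PureBraid n).subtype).codRestrict _ (insertionHom_mem_pureBraid m)

theorem pureInsertion_deleteBand {m i j : ℕ} (hm : m < n + 2) (hij : i < j) (hj : j ≤ n + 1)
    (hi : i ≠ m) (hjm : j ≠ m) {x : PureBraid n} (hx : (x : Braid n) = band n (dlB m i) (dlB m j)) :
    (pureInsertion m x : Braid (n + 1)) = band (n + 1) i j := by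
  have hins : ∀ y, y ≠ m → insIdx m (dlB m y) = y := fun y hy => by
    simp only [insIdx, dlB]; split_ifs <;> omega
  change insertionHom n m x = _
  rw [hx, insertionHom_band (by simp only [dlB]; split_ifs <;> omega)
    (by simp only [dlB]; split_ifs <;> omega), hins i hi, hins j hjm]

end StrandInsertion

section IndexDeletion

variable {n m : ℕ} {q : Gn3 (n + 1) →* Gn3 n}

theorem qCond.map_cc_eq_one (hq : qCond n m q) {i j : ℕ} (hij : i < j) (hj : j < n + 1)
    (hm : m = i ∨ m = j) : q (cc (n + 1) i j) = 1 := by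
  have hk : ∀ k, k < n + 1 → k ≠ i → k ≠ j → q (a3 (n + 1) i j k) = 1 := fun k hk _ _ => by
    rw [hq i j k (by omega) hj hk (by omega) (by omega) (by omega), if_pos (by omega)]
  rw [cc, map_mul, map_list_prod, map_list_prod, List.prod_eq_one, List.prod_eq_one, one_mul] <;>
  · intro x hx
    simp only [List.map_map, List.mem_map, List.mem_filter, List.mem_range,
      decide_eq_true_eq] at hx
    obtain ⟨k, hk', rfl⟩ := hx
    exact hk k hk'.1 (by omega) (by omega)

theorem qCond.map_phiW_eq_one (hq : qCond n m q) {i j : ℕ} (hij : i < j) (hj : j < n + 1)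
    (hm : m = i ∨ m = j) : q (phiW (n + 1) i j) = 1 := by
  rw [phiW, map_mul, map_mul, map_inv, map_pow, hq.map_cc_eq_one hij hj hm, one_pow, mul_one,
    inv_mul_cancel]

end IndexDeletion

theorem comp_phi_eq_comp_insertion_comp_deletion {n m : ℕ} (hm : m < n + 2)
    {φ : PureBraid (n + 1) →* Gn3 (n + 2)} (hφ : phiCond (n + 1) φ)
    {q : Gn3 (n + 2) →* Gn3 (n + 1)} (hq : qCond (n + 1) m q)
    {p : PureBraid (n + 1) →* PureBraid n} (hp : pCond n m p) :
    q.comp φ = (q.comp φ).comp ((pureInsertion m).comp p) := by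
  refine PureBraid.hom_ext fun i j hij hj x hx => ?_
  have hpx := hp i j hij (by omega) x hx
  simp only [MonoidHom.comp_apply]
  by_cases h : i = m ∨ j = m
  · rw [if_pos h] at hpx
    rw [show p x = 1 from Subtype.ext hpx, map_one, map_one, map_one,
      hφ i j hij (by omega) x hx, hq.map_phiW_eq_one hij (by omega) (by omega)]
  · rw [if_neg h] at hpx
    obtain ⟨hi, hjm⟩ := not_or.mp h
    rw [hφ i j hij (by omega) x hx,
      hφ i j hij (by omega) _ (pureInsertion_deleteBand hm hij hj hi hjm hpx)]

/-- if `β` is a Brunnian pure braid on `n+2` strands (i.e. `p_m β = 1` for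
every strand-deletion homomorphism `p_m`), then `φ(β)` is Brunnian in `G_{n+2}^3` (i.e.
`q_m (φ β) = 1` for every index-deletion homomorphism `q_m`). -/
theorem stmt18 (n : ℕ) (φ : PureBraid (n + 1) →* Gn3 (n + 2)) (hφ : phiCond (n + 1) φ)
    (β : PureBraid (n + 1))
    (hβ : ∀ m : ℕ, m < n + 2 → ∀ p : PureBraid (n + 1) →* PureBraid n,
      pCond n m p → p β = 1) :
    ∀ m : ℕ, m < n + 2 → ∀ q : Gn3 (n + 2) →* Gn3 (n + 1),
      qCond (n + 1) m q → q (φ β) = 1 := by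
  intro m hm q hq
  have hp := pCond_pureDeletion hm
  rw [← MonoidHom.comp_apply q φ, comp_phi_eq_comp_insertion_comp_deletion hm hφ hq hp]
  simp only [MonoidHom.comp_apply, hβ m hm _ hp, map_one]
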